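/- arXiv:1807.10918 — 2 statements merged into one kernel-verified Lean document; each statement's English description precedes it below -/
import Mathlib

section
/- Let x = (z_x, a) and y = (z_y, b) be infinite decimals, and let k ≥ 1 satisfy a(k) + b(k) ≠ 9. Then for every n > k one has T_{k−1}(x_n + y_n) = T_{k−1}(x_k + y_k), where x_j, y_j are the j-th rational truncations and T_m(q) = ⌊10^m q⌋/10^m. -/
/-- An infinite decimal: integer part `z` and digits `d : ℕ → ℕ` (indices ≥ 1 used),
each digit between 0 and 9. -/
structure InfDec where
  z : ℤ
  d : ℕ → ℕ
  d_le : ∀ k, 1 ≤ k → d k ≤ 9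

/-- The `k`-th rational truncation `x_k = z + Σ_{i=1}^k d(i)·10^{-i}`. -/
def InfDec.trunc (x : InfDec) (k : ℕ) : ℚ :=
  (x.z : ℚ) + ∑ i ∈ Finset.Icc 1 k, (x.d i : ℚ) / 10 ^ i

/-- The real value `val(x) = z + Σ_{i=1}^∞ d(i)·10^{-i}`. -/
noncomputable def InfDec.val (x : InfDec) : ℝ :=
  (x.z : ℝ) + ∑' i : ℕ, (x.d (i + 1) : ℝ) / 10 ^ (i + 1)

/-- Admissibility: `d(k) < 9` for infinitely many `k`. -/
def InfDec.Admissible (x : InfDec) : Prop :=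
  ∀ N : ℕ, ∃ k ≥ N, x.d k < 9

/-- The `m`-th truncation of a rational: `T_m(q) = ⌊10^m q⌋ / 10^m`. -/
def Tq (m : ℕ) (q : ℚ) : ℚ := (⌊(10 : ℚ) ^ m * q⌋ : ℚ) / 10 ^ m

/-- The `m`-th truncation of a real: `T_m(r) = ⌊10^m r⌋ / 10^m`. -/
noncomputable def Tr (m : ℕ) (r : ℝ) : ℝ := (⌊(10 : ℝ) ^ m * r⌋ : ℝ) / 10 ^ m

/-- The `m`-th digit of a rational (`m ≥ 1`): `θ_m(q) = ⌊10^m q⌋ − 10·⌊10^{m−1} q⌋`. -/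
def digq (m : ℕ) (q : ℚ) : ℤ := ⌊(10 : ℚ) ^ m * q⌋ - 10 * ⌊(10 : ℚ) ^ (m - 1) * q⌋

lemma trunc_split (x : InfDec) {a b : ℕ} (hab : a ≤ b) :
    x.trunc b = x.trunc a + ∑ i ∈ Finset.Ioc a b, (x.d i : ℚ) / 10 ^ i := by
  unfold InfDec.trunc
  rw [add_assoc]
  congr 1
  rw [show (1:ℕ) = 0 + 1 from rfl, Finset.Icc_add_one_left_eq_Ioc, Finset.Icc_add_one_left_eq_Ioc,
    ← Finset.sum_Ioc_consecutive _ (Nat.zero_le a) hab]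

lemma trunc_int (x : InfDec) (m : ℕ) : ∃ N : ℤ, (10:ℚ)^m * x.trunc m = N := by
  refine ⟨x.z * 10^m + ∑ i ∈ Finset.Icc 1 m, (x.d i : ℤ) * 10^(m-i), ?_⟩
  unfold InfDec.trunc
  push_cast
  rw [mul_add, Finset.mul_sum]
  congr 1
  · ring
  refine Finset.sum_congr rfl fun i hi => ?_
  have hi' : i ≤ m := (Finset.mem_Icc.mp hi).2
  have h10 : (10:ℚ)^m = 10^(m-i) * 10^i := by rw [← pow_add, Nat.sub_add_cancel hi']
  rw [h10]
  field_simp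

lemma tail_le (x : InfDec) (k : ℕ) : ∀ n, k ≤ n →
    ∑ i ∈ Finset.Ioc k n, (x.d i : ℚ) / 10 ^ i ≤ 1/10^k - 1/10^n := by
  intro n hn
  induction n, hn using Nat.le_induction with
  | base => simp
  | succ n hn ih =>
    rw [Finset.sum_Ioc_succ_top hn]
    have hd : (x.d (n+1) : ℚ) ≤ 9 := by
      exact_mod_cast x.d_le (n+1) (Nat.le_add_left 1 n)
    have hpow : (0:ℚ) < 10 ^ n := by positivity
    have : (x.d (n+1) : ℚ) / 10 ^ (n+1) ≤ 9 / 10 ^ (n+1) := by gcongr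
    have key : (9:ℚ) / 10 ^ (n+1) - 1/10^n = -(1/10^(n+1)) := by
      rw [pow_succ]; field_simp; ring
    linarith [this, ih]

lemma tail_nonneg (x : InfDec) (k n : ℕ) :
    0 ≤ ∑ i ∈ Finset.Ioc k n, (x.d i : ℚ) / 10 ^ i :=
  Finset.sum_nonneg fun i _ => by positivity

theorem stmt5 (x y : InfDec) (k : ℕ) (hk : 1 ≤ k) (h : x.d k + y.d k ≠ 9) :
    ∀ n > k, Tq (k - 1) (x.trunc n + y.trunc n)
      = Tq (k - 1) (x.trunc k + y.trunc k) := by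
  intro n hn
  obtain ⟨m, rfl⟩ : ∃ m, k = m + 1 := ⟨k - 1, (Nat.succ_pred_eq_of_pos hk).symm⟩
  have hm1 : (m + 1) - 1 = m := rfl
  rw [hm1]
  obtain ⟨Nx, hNx⟩ := trunc_int x m
  obtain ⟨Ny, hNy⟩ := trunc_int y m
  set c : ℕ := x.d (m+1) + y.d (m+1) with hc
  have hc18 : (c:ℚ) ≤ 18 := by
    have h1 := x.d_le (m+1) (Nat.le_add_left 1 m)
    have h2 := y.d_le (m+1) (Nat.le_add_left 1 m)
    have : c ≤ 18 := by omega
    exact_mod_cast this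
  have hc0 : (0:ℚ) ≤ c := Nat.cast_nonneg c
  -- value at k
  have hxk : x.trunc (m+1) = x.trunc m + (x.d (m+1) : ℚ)/10^(m+1) := by
    rw [trunc_split x (Nat.le_succ m)]
    simp
  have hyk : y.trunc (m+1) = y.trunc m + (y.d (m+1) : ℚ)/10^(m+1) := by
    rw [trunc_split y (Nat.le_succ m)]
    simp
  have ea : (10:ℚ)^m * ((x.d (m+1):ℚ)/10^(m+1)) = (x.d (m+1):ℚ)/10 := by
    field_simp
    rw [pow_succ]; ring
  have eb : (10:ℚ)^m * ((y.d (m+1):ℚ)/10^(m+1)) = (y.d (m+1):ℚ)/10 := by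
    field_simp
    rw [pow_succ]; ring
  have hB : (10:ℚ)^m * (x.trunc (m+1) + y.trunc (m+1))
      = (Nx + Ny : ℤ) + (c:ℚ)/10 := by
    rw [hxk, hyk]
    push_cast [hc]
    linear_combination hNx + hNy + ea + eb
  -- tail
  have hxn : x.trunc n = x.trunc (m+1) + ∑ i ∈ Finset.Ioc (m+1) n, (x.d i : ℚ)/10^i :=
    trunc_split x hn.le
  have hyn : y.trunc n = y.trunc (m+1) + ∑ i ∈ Finset.Ioc (m+1) n, (y.d i : ℚ)/10^i :=
    trunc_split y hn.le
  set tx := ∑ i ∈ Finset.Ioc (m+1) n, (x.d i : ℚ)/10^i with htx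
  set ty := ∑ i ∈ Finset.Ioc (m+1) n, (y.d i : ℚ)/10^i with hty
  have htx0 : 0 ≤ tx := tail_nonneg x (m+1) n
  have hty0 : 0 ≤ ty := tail_nonneg y (m+1) n
  have hpn : (0:ℚ) < 1/10^n := by positivity
  have htxle : tx ≤ 1/10^(m+1) - 1/10^n := tail_le x (m+1) n hn.le
  have htyle : ty ≤ 1/10^(m+1) - 1/10^n := tail_le y (m+1) n hn.le
  have hT : (10:ℚ)^m * (tx + ty) < 2/10 := by
    have hp : (0:ℚ) < 10^m := by positivity
    have : tx + ty < 2/10^(m+1) := by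
      have e : (2:ℚ)/10^(m+1) = 1/10^(m+1) + 1/10^(m+1) := by ring
      rw [e]; linarith
    have h2 : (10:ℚ)^m * (2/10^(m+1)) = 2/10 := by
      rw [pow_succ]; field_simp
    calc (10:ℚ)^m * (tx + ty) < 10^m * (2/10^(m+1)) := by gcongr
      _ = 2/10 := h2
  have hT0 : 0 ≤ (10:ℚ)^m * (tx + ty) := by positivity
  have hA : (10:ℚ)^m * (x.trunc n + y.trunc n)
      = (Nx + Ny : ℤ) + (c:ℚ)/10 + 10^m * (tx + ty) := by
    rw [hxn, hyn]
    rw [show x.trunc (m+1) + tx + (y.trunc (m+1) + ty)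
      = (x.trunc (m+1) + y.trunc (m+1)) + (tx + ty) by ring]
    rw [mul_add, hB]
  unfold Tq
  congr 1
  rw [hA, hB]
  have hc9 : (c:ℚ) ≠ 9 := by exact_mod_cast fun hh => h (by exact_mod_cast hh)
  rcases lt_or_gt_of_ne hc9 with hlt | hgt
  · have hc8 : (c:ℚ) ≤ 8 := by
      have h9 : c < 9 := by exact_mod_cast hlt
      have : c ≤ 8 := by omega
      exact_mod_cast this
    have e1 : ⌊((Nx+Ny:ℤ):ℚ) + (c:ℚ)/10 + 10^m*(tx+ty)⌋ = Nx+Ny := by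
      rw [Int.floor_eq_iff]
      constructor <;> push_cast <;> linarith
    have e2 : ⌊((Nx+Ny:ℤ):ℚ) + (c:ℚ)/10⌋ = Nx+Ny := by
      rw [Int.floor_eq_iff]
      constructor <;> push_cast <;> linarith
    rw [e1, e2]
  · have hc10 : (10:ℚ) ≤ c := by
      have h9 : 9 < c := by exact_mod_cast hgt
      have : 10 ≤ c := by omega
      exact_mod_cast this
    have e1 : ⌊((Nx+Ny:ℤ):ℚ) + (c:ℚ)/10 + 10^m*(tx+ty)⌋ = Nx+Ny+1 := by
      rw [Int.floor_eq_iff]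
      constructor <;> push_cast <;> linarith
    have e2 : ⌊((Nx+Ny:ℤ):ℚ) + (c:ℚ)/10⌋ = Nx+Ny+1 := by
      rw [Int.floor_eq_iff]
      constructor <;> push_cast <;> linarith
    rw [e1, e2]
end

section
/- Let x and y be admissible infinite decimals with nonnegative integer parts. Then there exists a positive integer M, depending only on x and y, such that |T_k(val(x)·val(y)) − x_k·y_k| ≤ M·10^{-k} for all k ≥ 0, where x_k, y_k are the k-th rational truncations, val denotes the real value, and T_k(r) = ⌊10^k r⌋/10^k. -/
lemma summable_digits (x : InfDec) :
    Summable (fun i : ℕ => (x.d (i + 1) : ℝ) / 10 ^ (i + 1)) := by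
  refine Summable.of_nonneg_of_le (fun i => by positivity) (fun i => ?_)
    (((summable_geometric_of_lt_one (r := (1/10:ℝ)) (by norm_num) (by norm_num)).mul_left (9/10 : ℝ)))
  · have hd : (x.d (i + 1) : ℝ) ≤ 9 := by
      exact_mod_cast x.d_le (i + 1) (Nat.le_add_left 1 i)
    rw [div_le_iff₀ (by positivity)]
    calc (x.d (i+1):ℝ) ≤ 9 := hd
      _ = 9 / 10 * (1/10)^i * 10^(i+1) := by rw [one_div, inv_pow]; field_simp; ring

lemma trunc_cast (x : InfDec) (k : ℕ) :
    ((x.trunc k : ℚ) : ℝ) = (x.z : ℝ) + ∑ i ∈ Finset.range k, (x.d (i + 1) : ℝ) / 10 ^ (i + 1) := by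
  rw [InfDec.trunc]
  push_cast
  congr 1
  rw [← Finset.Ico_add_one_right_eq_Icc, Finset.sum_Ico_eq_sum_range]
  simp [add_comm 1]

lemma val_sub_trunc (x : InfDec) (k : ℕ) :
    x.val - ((x.trunc k : ℚ) : ℝ) = ∑' i : ℕ, (x.d (i + k + 1) : ℝ) / 10 ^ (i + k + 1) := by
  rw [trunc_cast, InfDec.val]
  have := (summable_digits x).sum_add_tsum_nat_add k
  linarith [this]

lemma trunc_le_val (x : InfDec) (k : ℕ) : ((x.trunc k : ℚ) : ℝ) ≤ x.val := by
  have h := val_sub_trunc x k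
  have hnn : 0 ≤ ∑' i : ℕ, (x.d (i + k + 1) : ℝ) / 10 ^ (i + k + 1) :=
    tsum_nonneg (fun i => by positivity)
  linarith

lemma val_le_trunc_add (x : InfDec) (k : ℕ) :
    x.val ≤ ((x.trunc k : ℚ) : ℝ) + (1 / 10) ^ k := by
  have h := val_sub_trunc x k
  have hsum : Summable (fun i : ℕ => (x.d (i + k + 1) : ℝ) / 10 ^ (i + k + 1)) :=
    (summable_nat_add_iff (f := fun i : ℕ => (x.d (i+1):ℝ)/10^(i+1)) k).mpr (summable_digits x)
  have hle : ∑' i : ℕ, (x.d (i + k + 1) : ℝ) / 10 ^ (i + k + 1)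
      ≤ ∑' i : ℕ, (9 * (1/10)^(k+1) : ℝ) * (1/10) ^ i := by
    refine Summable.tsum_le_tsum (fun i => ?_) hsum
      ((summable_geometric_of_lt_one (r := (1/10:ℝ)) (by norm_num) (by norm_num)).mul_left (9 * (1/10:ℝ)^(k+1)))
    have hd : (x.d (i + k + 1) : ℝ) ≤ 9 := by
      exact_mod_cast x.d_le (i + k + 1) (by omega)
    rw [div_le_iff₀ (by positivity)]
    calc (x.d (i+k+1):ℝ) ≤ 9 := hd
      _ = 9 * (1/10)^(k+1) * (1/10)^i * 10^(i+k+1) := by simp only [one_div, inv_pow]; field_simp; ring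
  have hg : ∑' i : ℕ, (9 * (1/10)^(k+1) : ℝ) * (1/10) ^ i = (1/10 : ℝ)^k := by
    rw [tsum_mul_left, tsum_geometric_of_lt_one (r := (1/10:ℝ)) (by norm_num) (by norm_num)]
    field_simp
    ring
  linarith [hle, hg.le, hg.ge]

lemma trunc_nonneg (x : InfDec) (hxz : 0 ≤ x.z) (k : ℕ) : (0:ℝ) ≤ ((x.trunc k : ℚ) : ℝ) := by
  rw [trunc_cast]
  have : (0:ℝ) ≤ (x.z : ℝ) := by exact_mod_cast hxz
  have : (0:ℝ) ≤ ∑ i ∈ Finset.range k, (x.d (i + 1) : ℝ) / 10 ^ (i + 1) :=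
    Finset.sum_nonneg (fun i _ => by positivity)
  linarith


lemma Tr_sub_abs (m : ℕ) (r : ℝ) : |Tr m r - r| ≤ (1 / 10) ^ m := by
  have h1 : ((⌊(10:ℝ)^m * r⌋ : ℤ) : ℝ) ≤ (10:ℝ)^m * r := Int.floor_le _
  have h2 : (10:ℝ)^m * r < ((⌊(10:ℝ)^m * r⌋ : ℤ) : ℝ) + 1 := Int.lt_floor_add_one _
  have hp : (0:ℝ) < 10 ^ m := by positivity
  have hT : Tr m r * 10 ^ m = ((⌊(10:ℝ)^m * r⌋ : ℤ) : ℝ) := by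
    rw [Tr]; field_simp
  have he : (1/10:ℝ) ^ m * 10 ^ m = 1 := by rw [← mul_pow]; norm_num
  rw [abs_le]
  constructor <;> nlinarith [h1, h2, hp, hT, he]

lemma trunc_zero_cast (x : InfDec) : ((x.trunc 0 : ℚ) : ℝ) = (x.z : ℝ) := by
  simp [InfDec.trunc]

theorem stmt9 (x y : InfDec) (hx : x.Admissible) (hy : y.Admissible)
    (hxz : 0 ≤ x.z) (hyz : 0 ≤ y.z) :
    ∃ M : ℕ, 0 < M ∧ ∀ k : ℕ,
      |Tr k (x.val * y.val) - (x.trunc k : ℝ) * (y.trunc k : ℝ)| ≤ (M : ℝ) / 10 ^ k := by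
  refine ⟨x.z.toNat + y.z.toNat + 3, by omega, fun k => ?_⟩
  set A := x.val with hA
  set B := y.val with hB
  set a := ((x.trunc k : ℚ) : ℝ) with ha
  set b := ((y.trunc k : ℚ) : ℝ) with hb
  set ε := (1/10:ℝ) ^ k with hε
  have hε0 : 0 < ε := by positivity
  have haA : a ≤ A := trunc_le_val x k
  have hbB : b ≤ B := trunc_le_val y k
  have hAa : A ≤ a + ε := val_le_trunc_add x k
  have hBb : B ≤ b + ε := val_le_trunc_add y k
  have ha0 : 0 ≤ a := trunc_nonneg x hxz k
  have hb0 : 0 ≤ b := trunc_nonneg y hyz k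
  have hA1 : A ≤ (x.z : ℝ) + 1 := by
    have := val_le_trunc_add x 0
    rw [trunc_zero_cast] at this
    simpa using this
  have hB1 : B ≤ (y.z : ℝ) + 1 := by
    have := val_le_trunc_add y 0
    rw [trunc_zero_cast] at this
    simpa using this
  have hfl := Tr_sub_abs k (A * B)
  have hzx : (0:ℝ) ≤ (x.z : ℝ) := by exact_mod_cast hxz
  have hzy : (0:ℝ) ≤ (y.z : ℝ) := by exact_mod_cast hyz
  have h1 : |Tr k (A * B) - a * b| ≤ |Tr k (A * B) - A * B| + |A * B - a * b| :=
    abs_sub_le _ _ _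
  have h2 : |A * B - a * b| ≤ ((x.z : ℝ) + 1) * ε + ((y.z : ℝ) + 1) * ε := by
    rw [abs_of_nonneg (by nlinarith)]
    nlinarith
  have hM : ((x.z.toNat + y.z.toNat + 3 : ℕ) : ℝ) = (x.z : ℝ) + (y.z : ℝ) + 3 := by
    have e1 : ((x.z.toNat : ℕ) : ℝ) = (x.z : ℝ) := by exact_mod_cast Int.toNat_of_nonneg hxz
    have e2 : ((y.z.toNat : ℕ) : ℝ) = (y.z : ℝ) := by exact_mod_cast Int.toNat_of_nonneg hyz
    push_cast
    rw [e1, e2]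
  have hdiv : ((x.z.toNat + y.z.toNat + 3 : ℕ) : ℝ) / 10 ^ k
      = ((x.z : ℝ) + 1) * ε + ((y.z : ℝ) + 1) * ε + ε := by
    rw [hM, hε, one_div, inv_pow]
    field_simp
    ring
  rw [hdiv]
  linarith
end
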